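/- Let W be squarefree-times-prime-power structure W = 2^J · 27 · ∏_{5 ≤ p ≤ w} p, Q ≥ 1 an integer, and b with gcd(b, W) = gcd(b-1, s(W)) = 1, where s(n) is the product of primes p | n with p ≡ -1 (mod 4), p ≠ 3. Then the cardinality of 𝒬 = {c₀ mod Q : gcd(W c₀ + b, Q) = 1, gcd(W c₀ + b - 1, s(Q)) = 1} equals Q · ∏_{p | Q, p ∤ W, p ≡ 1 mod 4 or p ∈ {2,3}} (1 - 1/p) · ∏_{p | Q, p ∤ W, p ≡ -1 mod 4, p ≠ 3} (1 - 2/p). -/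

import Mathlib

/-!
Call `x` admissible modulo `n` when `gcd(x, n) = gcd(x - 1, s(n)) = 1`. Since `s` is
multiplicative on coprime arguments and `s(n) ∣ n`, admissibility modulo `m * n` is admissibility
modulo `m` and modulo `n`, and admissibility of `W c + b` modulo `n` is `n`-periodic in `c`; by the
Chinese remainder theorem the number of admissible `c` modulo `Q` is multiplicative in `Q`.
Modulo `p ^ e` only `W c + b` mod `p` matters. If `p ∣ W` it is `b`, which is admissible by
hypothesis, so all `p ^ e` residues count. If `p ∤ W`, then `c ↦ W c + b` permutes `ZMod p`,
so the count is `p ^ (e - 1)` times the number of admissible residues mod `p`, which is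
`p - 1`, or `p - 2` (neither `0` nor `1`) when `p ≡ 3 (mod 4)` and `p ≠ 3`.
-/

open Finset Function

/-- `sFun q` is the product of the distinct primes `p ∣ q` with
`p ≡ -1 (mod 4)` and `p ≠ 3`. -/
def sFun (n : ℕ) : ℕ := ∏ p ∈ n.primeFactors.filter (fun p => p % 4 = 3 ∧ p ≠ 3), p

namespace Nat

theorem count_mul_of_periodic {P : ℕ → Prop} [DecidablePred P] {m : ℕ} (hP : Periodic P m)
    (k : ℕ) : count P (k * m) = k * count P m := by
  induction k with
  | zero => simp
  | succ k ih =>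
    have hshift : (fun j => P (k * m + j)) = P := funext fun j => by
      rw [add_comm]; exact hP.nat_mul k j
    rw [add_mul, one_mul, count_add, ih]
    simp only [hshift, add_mul, one_mul]

theorem count_and_mul_of_coprime {P R : ℕ → Prop} [DecidablePred P] [DecidablePred R]
    {m n : ℕ} (h : m.Coprime n) (hP : Periodic P m) (hR : Periodic R n) :
    count (fun c => P c ∧ R c) (m * n) = count P m * count R n := by
  simp only [count_eq_card_filter_range]
  set f : ℕ → ℕ × ℕ := fun c => (c % m, c % n)
  have hinj : Set.InjOn f (range (m * n)) := fun c hc c' hc' hcc' =>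
    ((modEq_and_modEq_iff_modEq_mul h).1 ⟨congrArg Prod.fst hcc', congrArg Prod.snd hcc'⟩)
      |>.eq_of_lt_of_lt (mem_range.1 hc) (mem_range.1 hc')
  have himage : (range (m * n)).image f = range m ×ˢ range n := by
    refine eq_of_subset_of_card_le (fun q hq => ?_) ?_
    · obtain ⟨c, hc, rfl⟩ := mem_image.1 hq
      have hmn : 0 < m * n := (zero_le c).trans_lt (mem_range.1 hc)
      exact mem_product.2 ⟨mem_range.2 (mod_lt _ (pos_of_ne_zero (left_ne_zero_of_mul hmn.ne'))),
        mem_range.2 (mod_lt _ (pos_of_ne_zero (right_ne_zero_of_mul hmn.ne')))⟩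
    · rw [Finset.card_image_of_injOn hinj, card_product, card_range, card_range, card_range]
  rw [← card_product, ← filter_product, ← himage, filter_image,
    Finset.card_image_of_injOn (hinj.mono (filter_subset _ _))]
  simp only [f, hP.map_mod_nat, hR.map_mod_nat]

end Nat

theorem ZMod.count_affine_eq_card {n W : ℕ} [NeZero n] (hW : W.Coprime n) (a : ℤ)
    (S : ZMod n → Prop) [DecidablePred S] :
    Nat.count (fun c : ℕ => S (W * c + a)) n = #{y | S y} := by
  set f : ℕ → ZMod n := fun c => W * c + a
  have hinj : Set.InjOn f (range n) := fun c hc c' hc' hcc' => by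
    have hcast : (c : ZMod n) = c' :=
      ((ZMod.isUnit_iff_coprime W n).2 hW).mul_left_cancel (add_right_cancel hcc')
    exact ((ZMod.natCast_eq_natCast_iff c c' n).1 hcast).eq_of_lt_of_lt
      (mem_range.1 hc) (mem_range.1 hc')
  have himage : (range n).image f = univ := eq_of_subset_of_card_le (subset_univ _) <| by
    rw [card_image_of_injOn hinj, card_univ, ZMod.card, card_range]
  rw [Nat.count_eq_card_filter_range, ← card_image_of_injOn (hinj.mono (filter_subset _ _)),
    ← filter_image, himage]

theorem ZMod.card_filter_ne_zero (p : ℕ) [NeZero p] : #{y : ZMod p | y ≠ 0} = p - 1 := by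
  rw [filter_ne', card_erase_of_mem (mem_univ _), card_univ, ZMod.card]

theorem ZMod.card_filter_ne_zero_and_ne_one (p : ℕ) [Fact (1 < p)] :
    #{y : ZMod p | y ≠ 0 ∧ y ≠ 1} = p - 2 := by
  have : ({y | y ≠ 0 ∧ y ≠ 1} : Finset (ZMod p)) = (univ.erase 0).erase 1 := by
    ext y; simp [and_comm]
  rw [this, card_erase_of_mem (mem_erase.2 ⟨one_ne_zero, mem_univ _⟩),
    card_erase_of_mem (mem_univ _), card_univ, ZMod.card, Nat.sub_sub]

theorem Int.isCoprime_natCast_prime_iff {p : ℕ} (hp : p.Prime) (x : ℤ) :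
    IsCoprime x p ↔ (x : ZMod p) ≠ 0 := by
  rw [isCoprime_comm, (Nat.prime_iff_prime_int.1 hp).coprime_iff_not_dvd, ne_eq,
    ZMod.intCast_zmod_eq_zero_iff_dvd]

theorem sFun_dvd (n : ℕ) : sFun n ∣ n :=
  (prod_dvd_prod_of_subset _ _ _ (filter_subset _ _)).trans (Nat.prod_primeFactors_dvd n)

theorem sFun_dvd_sFun {m n : ℕ} (h : m ∣ n) (hn : n ≠ 0) : sFun m ∣ sFun n :=
  prod_dvd_prod_of_subset _ _ _ (filter_subset_filter _ (Nat.primeFactors_mono h hn))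

theorem sFun_mul {m n : ℕ} (h : m.Coprime n) : sFun (m * n) = sFun m * sFun n := by
  rw [sFun, h.primeFactors_mul, filter_union,
    prod_union (disjoint_filter_filter h.disjoint_primeFactors), sFun, sFun]

theorem sFun_prime_pow {p e : ℕ} (hp : p.Prime) (he : e ≠ 0) :
    sFun (p ^ e) = if p % 4 = 3 ∧ p ≠ 3 then p else 1 := by
  rw [sFun, Nat.primeFactors_pow p he, hp.primeFactors, filter_singleton]
  split_ifs <;> simp

def IsAdmissible (n : ℕ) (x : ℤ) : Prop :=
  Int.gcd x n = 1 ∧ Int.gcd (x - 1) (sFun n) = 1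

instance (n : ℕ) (x : ℤ) : Decidable (IsAdmissible n x) :=
  inferInstanceAs (Decidable (_ ∧ _))

theorem isAdmissible_iff {n : ℕ} {x : ℤ} :
    IsAdmissible n x ↔ IsCoprime x n ∧ IsCoprime (x - 1) (sFun n) := by
  simp only [IsAdmissible, Int.isCoprime_iff_gcd_eq_one]

theorem isAdmissible_add_mul (n : ℕ) (x k : ℤ) :
    IsAdmissible n (x + n * k) ↔ IsAdmissible n x := by
  obtain ⟨t, ht⟩ := sFun_dvd n
  have hshift : x + n * k - 1 = x - 1 + sFun n * (t * k) := by
    conv_lhs => rw [ht]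
    push_cast; ring
  rw [isAdmissible_iff, isAdmissible_iff, hshift, IsCoprime.add_mul_left_left_iff,
    IsCoprime.add_mul_left_left_iff]

theorem isAdmissible_mul {m n : ℕ} (h : m.Coprime n) {x : ℤ} :
    IsAdmissible (m * n) x ↔ IsAdmissible m x ∧ IsAdmissible n x := by
  simp only [isAdmissible_iff, sFun_mul h, Nat.cast_mul, IsCoprime.mul_right_iff]
  tauto

theorem IsAdmissible.of_dvd {n d : ℕ} {x : ℤ} (h : IsAdmissible n x) (hd : d ∣ n)
    (hn : n ≠ 0) : IsAdmissible d x := by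
  rw [isAdmissible_iff] at h ⊢
  exact ⟨h.1.of_isCoprime_of_dvd_right (Int.natCast_dvd_natCast.2 hd),
    h.2.of_isCoprime_of_dvd_right (Int.natCast_dvd_natCast.2 (sFun_dvd_sFun hd hn))⟩

theorem isAdmissible_prime_pow_iff {p e : ℕ} (hp : p.Prime) (he : e ≠ 0) (x : ℤ) :
    IsAdmissible (p ^ e) x ↔
      (x : ZMod p) ≠ 0 ∧ (p % 4 = 3 ∧ p ≠ 3 → (x : ZMod p) ≠ 1) := by
  rw [isAdmissible_iff, Nat.cast_pow, IsCoprime.pow_right_iff (Nat.pos_of_ne_zero he),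
    Int.isCoprime_natCast_prime_iff hp, sFun_prime_pow hp he]
  split_ifs with hbad
  · rw [Int.isCoprime_natCast_prime_iff hp, Int.cast_sub, Int.cast_one, sub_ne_zero]
    rw [imp_iff_right hbad]
  · simp [hbad, isCoprime_one_right]

def admissibleCount (W : ℕ) (b : ℤ) (n : ℕ) : ℕ :=
  Nat.count (fun c : ℕ => IsAdmissible n (W * c + b)) n

theorem periodic_isAdmissible (W n : ℕ) (b : ℤ) :
    Periodic (fun c : ℕ => IsAdmissible n (W * c + b)) n := fun c => by
  dsimp only
  rw [show (W : ℤ) * ↑(c + n) + b = W * c + b + n * W by push_cast; ring, isAdmissible_add_mul]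

theorem admissibleCount_one (W : ℕ) (b : ℤ) : admissibleCount W b 1 = 1 := by
  simp [admissibleCount, IsAdmissible, sFun]

theorem admissibleCount_mul (W : ℕ) (b : ℤ) {m n : ℕ} (h : m.Coprime n) :
    admissibleCount W b (m * n) = admissibleCount W b m * admissibleCount W b n := by
  simp only [admissibleCount, isAdmissible_mul h]
  exact Nat.count_and_mul_of_coprime h (periodic_isAdmissible W m b) (periodic_isAdmissible W n b)

theorem admissibleCount_prime_pow_of_dvd {W p e : ℕ} {b : ℤ} (hp : p.Prime) (he : e ≠ 0)
    (hpW : p ∣ W) (hW : W ≠ 0) (hb : IsAdmissible W b) :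
    admissibleCount W b (p ^ e) = p ^ e := by
  have hbp := (isAdmissible_prime_pow_iff hp one_ne_zero b).1 (hb.of_dvd (by rwa [pow_one]) hW)
  refine Nat.count_of_forall fun c _ => (isAdmissible_prime_pow_iff hp he _).2 ?_
  rwa [Int.cast_add, Int.cast_mul, Int.cast_natCast, (ZMod.natCast_eq_zero_iff W p).2 hpW,
    zero_mul, zero_add]

theorem admissibleCount_prime_pow_of_not_dvd {W p e : ℕ} [hp : Fact p.Prime] (b : ℤ)
    (he : e ≠ 0) (hpW : ¬ p ∣ W) : admissibleCount W b (p ^ e) =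
      p ^ (e - 1) * #{y : ZMod p | y ≠ 0 ∧ (p % 4 = 3 ∧ p ≠ 3 → y ≠ 1)} := by
  have hperiodic : Periodic (fun c : ℕ =>
      (W * c + b : ZMod p) ≠ 0 ∧ (p % 4 = 3 ∧ p ≠ 3 → (W * c + b : ZMod p) ≠ 1)) p :=
    fun c => by simp only [Nat.cast_add, ZMod.natCast_self, add_zero]
  simp only [admissibleCount, isAdmissible_prime_pow_iff hp.out he, Int.cast_add, Int.cast_mul,
    Int.cast_natCast]
  rw [← pow_sub_one_mul he, Nat.count_mul_of_periodic hperiodic]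
  congr 1
  exact ZMod.count_affine_eq_card (hp.out.coprime_iff_not_dvd.2 hpW).symm b
    (fun y => y ≠ 0 ∧ (p % 4 = 3 ∧ p ≠ 3 → y ≠ 1))

theorem cast_admissibleCount_prime_pow {W p e : ℕ} {b : ℤ} (hp : p.Prime) (he : e ≠ 0)
    (hW : W ≠ 0) (hb : IsAdmissible W b) :
    (admissibleCount W b (p ^ e) : ℝ) = p ^ e *
      (if ¬ p ∣ W ∧ (p % 4 = 1 ∨ p = 2 ∨ p = 3) then 1 - 1 / (p : ℝ) else 1) *
      (if ¬ p ∣ W ∧ p % 4 = 3 ∧ p ≠ 3 then 1 - 2 / (p : ℝ) else 1) := by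
  have := Fact.mk hp
  by_cases hpW : p ∣ W
  · simp [hpW, admissibleCount_prime_pow_of_dvd hp he hpW hW hb]
  have hp0 : (p : ℝ) ≠ 0 := by exact_mod_cast hp.ne_zero
  have hpe : (p : ℝ) ^ e = p ^ (e - 1) * p := (pow_sub_one_mul he _).symm
  rw [admissibleCount_prime_pow_of_not_dvd b he hpW, hpe]
  by_cases hbad : p % 4 = 3 ∧ p ≠ 3
  · simp only [imp_iff_right hbad, ZMod.card_filter_ne_zero_and_ne_one]
    rw [if_neg (by omega), if_pos ⟨hpW, hbad⟩, Nat.cast_mul, Nat.cast_sub hp.two_le]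
    push_cast
    field_simp
  · have hgood : p % 4 = 1 ∨ p = 2 ∨ p = 3 := by
      rcases hp.eq_two_or_odd with rfl | hodd <;> omega
    simp only [hbad, false_imp_iff, and_true, ZMod.card_filter_ne_zero]
    rw [if_pos ⟨hpW, hgood⟩, if_neg (by tauto), Nat.cast_mul, Nat.cast_sub hp.one_le]
    push_cast
    field_simp

theorem cast_admissibleCount {W Q : ℕ} {b : ℤ} (hW : W ≠ 0) (hb : IsAdmissible W b)
    (hQ : Q ≠ 0) :
    (admissibleCount W b Q : ℝ) = Q *
      (∏ p ∈ Q.primeFactors.filter (fun p => ¬ p ∣ W ∧ (p % 4 = 1 ∨ p = 2 ∨ p = 3)),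
        (1 - 1 / (p : ℝ))) *
      (∏ p ∈ Q.primeFactors.filter (fun p => ¬ p ∣ W ∧ p % 4 = 3 ∧ p ≠ 3),
        (1 - 2 / (p : ℝ))) := by
  have hfactor := Nat.multiplicative_factorization (admissibleCount W b)
    (fun _ _ => admissibleCount_mul W b) (admissibleCount_one W b) hQ
  have hQprod : (Q : ℝ) = ∏ p ∈ Q.primeFactors, ((p ^ Q.factorization p : ℕ) : ℝ) := by
    exact_mod_cast (Nat.prod_factorization_pow_eq_self hQ).symm
  rw [hfactor, Finsupp.prod, Nat.support_factorization, Nat.cast_prod, hQprod, prod_filter,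
    prod_filter, ← prod_mul_distrib, ← prod_mul_distrib]
  refine prod_congr rfl fun p hp => ?_
  rw [cast_admissibleCount_prime_pow (Nat.prime_of_mem_primeFactors hp)
    (Finsupp.mem_support_iff.1 hp) hW hb, Nat.cast_pow]

theorem stmt_12_general (J w Q W : ℕ) (hQ : 1 ≤ Q)
    (hW : W = 2^J * 27 * ∏ p ∈ (Finset.Icc 5 w).filter Nat.Prime, p)
    (b : ℤ) (hb : Int.gcd b W = 1) (hb1 : Int.gcd (b - 1) (sFun W) = 1) :
    ((((Finset.range Q).filter
        (fun c : ℕ => Int.gcd ((W : ℤ) * (c:ℤ) + b) Q = 1 ∧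
          Int.gcd ((W : ℤ) * (c:ℤ) + b - 1) (sFun Q) = 1)).card : ℝ))
      = (Q : ℝ) *
        (∏ p ∈ Q.primeFactors.filter
            (fun p => ¬ p ∣ W ∧ (p % 4 = 1 ∨ p = 2 ∨ p = 3)), (1 - 1/(p:ℝ))) *
        (∏ p ∈ Q.primeFactors.filter
            (fun p => ¬ p ∣ W ∧ p % 4 = 3 ∧ p ≠ 3), (1 - 2/(p:ℝ))) := by
  have hW0 : W ≠ 0 := by
    rw [hW]
    exact mul_ne_zero (by positivity) (prod_ne_zero_iff.2 fun p hp => (mem_filter.1 hp).2.ne_zero)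
  rw [← Nat.count_eq_card_filter_range]
  exact cast_admissibleCount hW0 ⟨hb, hb1⟩ (by omega)

theorem stmt_12 (J w Q W : ℕ) (hJ : 5 ≤ J) (hw : 10^(10^10) ≤ w) (hQ : 1 ≤ Q)
    (hW : W = 2^J * 27 * ∏ p ∈ (Finset.Icc 5 w).filter Nat.Prime, p)
    (b : ℤ) (hb : Int.gcd b W = 1) (hb1 : Int.gcd (b - 1) (sFun W) = 1) :
    ((((Finset.range Q).filter
        (fun c : ℕ => Int.gcd ((W : ℤ) * (c:ℤ) + b) Q = 1 ∧
          Int.gcd ((W : ℤ) * (c:ℤ) + b - 1) (sFun Q) = 1)).card : ℝ))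
      = (Q : ℝ) *
        (∏ p ∈ Q.primeFactors.filter
            (fun p => ¬ p ∣ W ∧ (p % 4 = 1 ∨ p = 2 ∨ p = 3)), (1 - 1/(p:ℝ))) *
        (∏ p ∈ Q.primeFactors.filter
            (fun p => ¬ p ∣ W ∧ p % 4 = 3 ∧ p ≠ 3), (1 - 2/(p:ℝ))) :=
  stmt_12_general J w Q W hQ hW b hb hb1
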